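/- arXiv:2503.21443 — 2 statements merged into one kernel-verified Lean document; each statement's English description precedes it below -/
import Mathlib

section
/- Let D be a symmetric positive definite p×p real matrix, A an N×p real matrix whose i-th row is nonzero, σ² > 0, and w = Aᵀ e_i. Then tr(A D^{-1} Aᵀ) - tr(A (D + (1/σ²) w wᵀ)^{-1} Aᵀ) > 0. In words: adding a rank-one observation strictly decreases the trace of the posterior predictive covariance. -/
/-!
By Sherman–Morrison, with `c = 1/σ²` the difference of the two traces is
`c ‖A D⁻¹ w‖² / (1 + c wᵀ D⁻¹ w)`. It is positive because `w` is the `i`-th row of `A`, so the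
`i`-th entry of `A D⁻¹ w` is `wᵀ D⁻¹ w > 0`.
-/

open Matrix

namespace Matrix

variable {n : Type*} [Fintype n]

theorem trace_mul_vecMulVec_mul_transpose {m : Type*} [Fintype m] {R : Type*} [CommSemiring R]
    (B C : Matrix m n R) (x y : n → R) :
    trace (B * vecMulVec x y * Cᵀ) = (B *ᵥ x) ⬝ᵥ (C *ᵥ y) := by
  rw [mul_vecMulVec, vecMulVec_mul, vecMul_transpose, trace_vecMulVec]

variable [DecidableEq n] {K : Type*} [Field K]

/-- The **Sherman–Morrison formula**. -/
theorem inv_add_vecMulVec {A : Matrix n n K} (hA : IsUnit A) (u v : n → K)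
    (h : 1 + v ⬝ᵥ A⁻¹ *ᵥ u ≠ 0) :
    (A + vecMulVec u v)⁻¹ =
      A⁻¹ - (1 + v ⬝ᵥ A⁻¹ *ᵥ u)⁻¹ • vecMulVec (A⁻¹ *ᵥ u) (v ᵥ* A⁻¹) := by
  have hAA : A * A⁻¹ = 1 := mul_nonsing_inv A ((isUnit_iff_isUnit_det A).1 hA)
  apply inv_eq_right_inv
  set k := (1 + v ⬝ᵥ A⁻¹ *ᵥ u)⁻¹
  have hk : k * (1 + v ⬝ᵥ A⁻¹ *ᵥ u) = 1 := inv_mul_cancel₀ h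
  have expand : (A + vecMulVec u v) * (A⁻¹ - k • vecMulVec (A⁻¹ *ᵥ u) (v ᵥ* A⁻¹)) =
      1 + (1 - k * (1 + v ⬝ᵥ A⁻¹ *ᵥ u)) • vecMulVec u (v ᵥ* A⁻¹) := by
    rw [Matrix.mul_sub, Matrix.add_mul, Matrix.add_mul, hAA, mul_smul_comm, mul_smul_comm,
      mul_vecMulVec, mulVec_mulVec, hAA, one_mulVec, vecMulVec_mul, vecMulVec_mul_vecMulVec,
      vecMulVec_smul, smul_smul, mul_add, mul_one, sub_smul, add_smul, one_smul]
    abel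
  rw [expand, hk, sub_self, zero_smul, add_zero]

theorem inv_add_smul_vecMulVec_self {D : Matrix n n K} (hD : IsUnit D) (hDs : D.IsSymm)
    (c : K) (w : n → K) (h : 1 + c * (w ⬝ᵥ D⁻¹ *ᵥ w) ≠ 0) :
    (D + c • vecMulVec w w)⁻¹ =
      D⁻¹ - (c / (1 + c * (w ⬝ᵥ D⁻¹ *ᵥ w))) • vecMulVec (D⁻¹ *ᵥ w) (D⁻¹ *ᵥ w) := by
  have hvec : w ᵥ* D⁻¹ = D⁻¹ *ᵥ w := by rw [← mulVec_transpose, hDs.inv.eq]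
  rw [← smul_vecMulVec, inv_add_vecMulVec hD, mulVec_smul, dotProduct_smul, smul_eq_mul,
    hvec, smul_vecMulVec, smul_smul, div_eq_inv_mul]
  rwa [mulVec_smul, dotProduct_smul, smul_eq_mul]

end Matrix

/-- Adding a rank-one observation strictly decreases the trace of the
posterior predictive covariance. -/
theorem trace_strict_decrease {N p : ℕ} (D : Matrix (Fin p) (Fin p) ℝ)
    (hD : D.PosDef) (A : Matrix (Fin N) (Fin p) ℝ)
    (σ2 : ℝ) (hσ2 : 0 < σ2) (i : Fin N)
    (w : Fin p → ℝ) (hw : w = Aᵀ *ᵥ Pi.single i 1) (hw0 : w ≠ 0) :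
    0 < trace (A * D⁻¹ * Aᵀ) -
        trace (A * (D + (σ2)⁻¹ • vecMulVec w w)⁻¹ * Aᵀ) := by
  set s := w ⬝ᵥ D⁻¹ *ᵥ w
  have hs : 0 < s := hD.inv.dotProduct_mulVec_pos hw0
  have hden : 0 < 1 + σ2⁻¹ * s := by positivity
  have hrow : w = A i := by rw [hw, mulVec_single_one]; rfl
  have hui : (A *ᵥ D⁻¹ *ᵥ w) i = s := show A i ⬝ᵥ _ = _ by rw [← hrow]
  have hu : A *ᵥ D⁻¹ *ᵥ w ≠ 0 := fun h0 => hs.ne' (by rw [← hui, h0, Pi.zero_apply])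
  rw [inv_add_smul_vecMulVec_self hD.isUnit hD.isHermitian _ _ hden.ne', Matrix.mul_sub,
    Matrix.sub_mul, trace_sub, sub_sub_cancel, Matrix.mul_smul, Matrix.smul_mul, trace_smul,
    trace_mul_vecMulVec_mul_transpose, smul_eq_mul]
  have hpos : 0 < (A *ᵥ D⁻¹ *ᵥ w) ⬝ᵥ (A *ᵥ D⁻¹ *ᵥ w) := by
    simpa using dotProduct_self_star_pos_iff.mpr hu
  positivity
end

section
/- For the set function f(J) = tr(Σ_y) - tr(σ² I_N + A ((1/σ²) Aᵀ P_J A + Γ^{-1})^{-1} Aᵀ) defined on subsets J of {1,…,N}, if every row of A is nonzero then f is strictly monotone increasing: J ⊂ J' (strict inclusion) implies f(J) < f(J'). -/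
/-!
Write `M_J = σ⁻² Aᵀ P_J A + Γ⁻¹`, so that `f J = tr(A Γ Aᵀ) - tr(A M_J⁻¹ Aᵀ)`. Adding an index
`i ∉ J` adds the rank-one term `σ⁻² aᵢ aᵢᵀ` to `M_J`, where `aᵢ` is the `i`-th row of `A`. By the
Sherman–Morrison formula this lowers `tr(A M_J⁻¹ Aᵀ)` by a positive multiple of `‖A M_J⁻¹ aᵢ‖²`,
which is nonzero because the `i`-th entry of `A M_J⁻¹ aᵢ` is `aᵢᵀ M_J⁻¹ aᵢ > 0`. Strict
decrease under one-point extensions is strict antitonicity on `Finset`s.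
-/

open Matrix

namespace Matrix

variable {m n : Type*}

/-- The Sherman–Morrison formula. -/
theorem inv_add_smul_vecMulVec [Fintype n] [DecidableEq n] {K : Type*} [Field K]
    {M : Matrix n n K} (hM : IsUnit M.det) (c : K) (u v : n → K)
    (h : 1 + c * (v ⬝ᵥ M⁻¹ *ᵥ u) ≠ 0) :
    (M + c • vecMulVec u v)⁻¹ =
      M⁻¹ - (c / (1 + c * (v ⬝ᵥ M⁻¹ *ᵥ u))) • vecMulVec (M⁻¹ *ᵥ u) (v ᵥ* M⁻¹) := by
  set k := c / (1 + c * (v ⬝ᵥ M⁻¹ *ᵥ u))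
  have hk : c - k - k * (c * (v ⬝ᵥ M⁻¹ *ᵥ u)) = 0 := by
    simp only [k]
    field_simp
    ring
  apply inv_eq_right_inv
  calc (M + c • vecMulVec u v) * (M⁻¹ - k • vecMulVec (M⁻¹ *ᵥ u) (v ᵥ* M⁻¹))
      = 1 + (c - k - k * (c * (v ⬝ᵥ M⁻¹ *ᵥ u))) • vecMulVec u (v ᵥ* M⁻¹) := by
        simp only [add_mul, mul_sub, Matrix.mul_smul, Matrix.smul_mul, mul_nonsing_inv _ hM,
          mul_vecMulVec M, mulVec_mulVec, one_mulVec, vecMulVec_mul, vecMul_vecMulVec,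
          vecMulVec_smul, smul_smul, sub_smul]
        abel
    _ = 1 := by rw [hk, zero_smul, add_zero]

theorem transpose_mul_diagonal_mul [Fintype m] [DecidableEq m] {R : Type*} [CommSemiring R]
    (A : Matrix m n R) (d : m → R) :
    Aᵀ * diagonal d * A = ∑ j, d j • vecMulVec (A j) (A j) := by
  ext k l
  rw [mul_apply]
  simp only [mul_diagonal, transpose_apply, sum_apply, smul_apply, vecMulVec_apply, smul_eq_mul]
  exact Finset.sum_congr rfl fun j _ => by ring

theorem trace_mul_inv_add_smul_vecMulVec_row_lt [Fintype m] [Fintype n] [DecidableEq n]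
    (A : Matrix m n ℝ) {i : m} (hi : A i ≠ 0) {M : Matrix n n ℝ} (hM : M.PosDef) {c : ℝ}
    (hc : 0 < c) :
    trace (A * (M + c • vecMulVec (A i) (A i))⁻¹ * Aᵀ) < trace (A * M⁻¹ * Aᵀ) := by
  set w := M⁻¹ *ᵥ A i
  have hγ : 0 < A i ⬝ᵥ w := by simpa using hM.inv.dotProduct_mulVec_pos hi
  have hk : 0 < c / (1 + c * (A i ⬝ᵥ w)) := by positivity
  have hw : A i ᵥ* M⁻¹ = w := by
    rw [← mulVec_transpose, ← conjTranspose_eq_transpose_of_trivial, hM.inv.isHermitian.eq]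
  have hAw : A *ᵥ w ≠ 0 := fun h => hγ.ne' (by simpa [mulVec, w] using congrFun h i)
  rw [inv_add_smul_vecMulVec hM.det_pos.ne'.isUnit c _ _ (by positivity), hw, Matrix.mul_sub,
    Matrix.sub_mul, trace_sub, Matrix.mul_smul, Matrix.smul_mul, trace_smul, mul_vecMulVec,
    vecMulVec_mul, vecMul_transpose, trace_vecMulVec, smul_eq_mul, sub_lt_self_iff]
  exact mul_pos hk (by simpa only [star_trivial] using dotProduct_star_self_pos_iff.2 hAw)

end Matrix

/-- The set function `f(J) = tr(Σ_y) - tr(Σ_post^{(J)})` is strictly monotone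
increasing when every row of `A` is nonzero. -/
theorem objective_strict_mono {N p : ℕ}
    (A : Matrix (Fin N) (Fin p) ℝ) (hA : ∀ i : Fin N, A i ≠ 0)
    (d : Fin p → ℝ) (hd : ∀ i, 0 < d i)
    (σ2 : ℝ) (hσ2 : 0 < σ2)
    (PJ : Finset (Fin N) → Matrix (Fin N) (Fin N) ℝ)
    (hPJ : ∀ J, PJ J = diagonal (fun j => if j ∈ J then (1 : ℝ) else 0))
    (f : Finset (Fin N) → ℝ)
    (hf : ∀ J, f J =
      trace (σ2 • (1 : Matrix (Fin N) (Fin N) ℝ) + A * diagonal d * Aᵀ) -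
      trace (σ2 • (1 : Matrix (Fin N) (Fin N) ℝ) +
        A * ((σ2)⁻¹ • (Aᵀ * PJ J * A) + (diagonal d)⁻¹)⁻¹ * Aᵀ)) :
    ∀ J J' : Finset (Fin N), J ⊂ J' → f J < f J' := by
  set M : Finset (Fin N) → Matrix (Fin p) (Fin p) ℝ :=
    fun J => σ2⁻¹ • ∑ j ∈ J, vecMulVec (A j) (A j) + (diagonal d)⁻¹
  have hM : ∀ J, (M J).PosDef := fun J =>
    PosDef.posSemidef_add
      ((posSemidef_sum J fun j _ => by simpa using posSemidef_vecMulVec_self_star (A j)).smul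
        (inv_nonneg.2 hσ2.le))
      (posDef_diagonal_iff.2 hd).inv
  have hf' : ∀ J, f J = trace (A * diagonal d * Aᵀ) - trace (A * (M J)⁻¹ * Aᵀ) := fun J => by
    rw [hf, hPJ, transpose_mul_diagonal_mul]
    simp only [ite_smul, one_smul, zero_smul, Finset.sum_ite_mem, Finset.univ_inter, trace_add, M]
    ring
  have hanti : StrictAnti fun J => trace (A * (M J)⁻¹ * Aᵀ) :=
    Finset.strictAnti_iff_forall_cons_lt.2 fun J i hi => by
      simp only [M]
      rw [Finset.sum_cons, add_comm (vecMulVec _ _), smul_add, add_right_comm]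
      exact trace_mul_inv_add_smul_vecMulVec_row_lt A (hA i) (hM J) (inv_pos.2 hσ2)
  intro J J' hJJ'
  rw [hf', hf']
  exact sub_lt_sub_left (hanti hJJ') _
end
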